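/- arXiv:2009.03967 — 3 statements merged into one kernel-verified Lean document; each statement's English description precedes it below -/
import Mathlib

section
/- Suppose u(t,·) is in H^n(𝕋^d) but not in H^{n+1}(𝕋^d) for some t > 0, and let V_m(t,x) = e_m + Σ_k (-i k_m t) u_k(t) e^{ik·x}. Then there exists m ∈ {1,…,d} such that ‖V_m(t,·)‖_{H^n} = ∞. -/
/-! For `k ≠ 0` one has `1 ≤ |k|²`, so the weight `1 + |k|² + ⋯ + |k|^{2(n+1)}` is at most
`2 |k|² (1 + ⋯ + |k|^{2n})`, and the divergence of the `Hⁿ⁺¹` series forces that of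
`Σ_k |k|² (1 + ⋯ + |k|^{2n}) |u_k|²`. Away from `k = 0` the coefficients of `V_m` are `-i k_m t u_k`,
so `Σ_m ‖V_m‖²_{Hⁿ}` dominates `t²` times that divergent series, and one of the finitely many
`V_m` must have infinite norm. -/

open scoped ENNReal

/-- `|k|²` for a frequency `k ∈ ℤᵈ`, as an extended nonnegative real. -/
noncomputable def kSq {d : ℕ} (k : Fin d → ℤ) : ℝ≥0∞ := ∑ m, ((k m).natAbs : ℝ≥0∞) ^ 2

/-- The Sobolev weight `1 + |k|² + ⋯ + |k|^{2n}`. -/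
noncomputable def sobWeight {d : ℕ} (n : ℕ) (k : Fin d → ℤ) : ℝ≥0∞ :=
  ∑ j ∈ Finset.range (n + 1), kSq k ^ j

/-- Squared Sobolev `Hⁿ` norm on the torus in terms of Fourier coefficients:
`‖v‖_{Hⁿ}² = (2π)ᵈ Σ_k (1 + |k|² + ⋯ + |k|^{2n}) |v_k|²` (possibly `+∞`). -/
noncomputable def hSobSq {d : ℕ} (n : ℕ) (v : (Fin d → ℤ) → Fin d → ℂ) : ℝ≥0∞ :=
  ENNReal.ofReal ((2 * Real.pi) ^ d) * ∑' k : Fin d → ℤ, sobWeight n k * (‖v k‖₊ : ℝ≥0∞) ^ 2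

/-- Fourier coefficients of `V_m(t,x) = e_m + Σ_k (-i k_m t) u_k e^{i k·x}`. -/
noncomputable def vCoef {d : ℕ} (t : ℝ) (v : (Fin d → ℤ) → Fin d → ℂ) (m : Fin d)
    (k : Fin d → ℤ) : Fin d → ℂ :=
  ((-Complex.I * (k m : ℂ) * (t : ℂ)) • v k) +
    (if k = 0 then (fun j => if j = m then 1 else 0) else 0)

theorem one_le_kSq {d : ℕ} {k : Fin d → ℤ} (hk : k ≠ 0) : 1 ≤ kSq k := by
  obtain ⟨m, hm⟩ := Function.ne_iff.mp hk
  calc (1 : ℝ≥0∞) ≤ ((k m).natAbs : ℝ≥0∞) ^ 2 := by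
        exact_mod_cast Nat.one_le_pow _ _ (Int.natAbs_pos.mpr hm)
    _ ≤ kSq k := Finset.single_le_sum (f := fun j => ((k j).natAbs : ℝ≥0∞) ^ 2)
        (fun _ _ => zero_le) (Finset.mem_univ m)

@[simp]
theorem kSq_zero {d : ℕ} : kSq (0 : Fin d → ℤ) = 0 := by
  simp [kSq]

theorem one_le_sobWeight {d : ℕ} (n : ℕ) (k : Fin d → ℤ) : 1 ≤ sobWeight n k :=
  (pow_zero (kSq k)).symm.trans_le <|
    Finset.single_le_sum (f := fun j => kSq k ^ j) (fun _ _ => zero_le)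
      (Finset.mem_range.mpr n.succ_pos)

theorem sobWeight_succ {d : ℕ} (n : ℕ) (k : Fin d → ℤ) :
    sobWeight (n + 1) k = 1 + kSq k * sobWeight n k := by
  rw [sobWeight, Finset.sum_range_succ', sobWeight, Finset.mul_sum, add_comm]
  simp only [pow_zero, pow_succ']

theorem sobWeight_succ_le {d : ℕ} (n : ℕ) (k : Fin d → ℤ) :
    sobWeight (n + 1) k ≤ (if k = 0 then 1 else 0) + 2 * (kSq k * sobWeight n k) := by
  rw [sobWeight_succ]
  split_ifs with hk
  · simp [hk]
  · have : 1 ≤ kSq k * sobWeight n k :=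
      one_le_mul (one_le_kSq hk) (one_le_sobWeight n k)
    rw [zero_add, two_mul]
    gcongr

theorem hSobSq_eq_top_iff {d : ℕ} (n : ℕ) (v : (Fin d → ℤ) → Fin d → ℂ) :
    hSobSq n v = ⊤ ↔ ∑' k, sobWeight n k * (‖v k‖₊ : ℝ≥0∞) ^ 2 = ⊤ := by
  have hc : ENNReal.ofReal ((2 * Real.pi) ^ d) ≠ 0 := by
    rw [Ne, ENNReal.ofReal_eq_zero, not_le]
    positivity
  rw [hSobSq, ENNReal.mul_eq_top]
  simp [hc]

theorem tsum_kSq_mul_sobWeight_eq_top {d n : ℕ} {v : (Fin d → ℤ) → Fin d → ℂ}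
    (hv : hSobSq (n + 1) v = ⊤) :
    ∑' k, kSq k * sobWeight n k * (‖v k‖₊ : ℝ≥0∞) ^ 2 = ⊤ := by
  rw [hSobSq_eq_top_iff] at hv
  have hle : ⊤ ≤ (‖v 0‖₊ : ℝ≥0∞) ^ 2 +
      2 * ∑' k, kSq k * sobWeight n k * (‖v k‖₊ : ℝ≥0∞) ^ 2 :=
    calc ⊤ = ∑' k, sobWeight (n + 1) k * (‖v k‖₊ : ℝ≥0∞) ^ 2 := hv.symm
      _ ≤ ∑' k, ((if k = 0 then (‖v 0‖₊ : ℝ≥0∞) ^ 2 else 0) +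
            2 * (kSq k * sobWeight n k * (‖v k‖₊ : ℝ≥0∞) ^ 2)) := by
        refine ENNReal.tsum_le_tsum fun k => ?_
        calc sobWeight (n + 1) k * (‖v k‖₊ : ℝ≥0∞) ^ 2
            ≤ ((if k = 0 then 1 else 0) + 2 * (kSq k * sobWeight n k)) *
                (‖v k‖₊ : ℝ≥0∞) ^ 2 := by gcongr; exact sobWeight_succ_le n k
          _ = _ := by split_ifs with hk <;> simp [hk, mul_assoc]
      _ = _ := by rw [ENNReal.tsum_add, tsum_ite_eq, ENNReal.tsum_mul_left]
  simpa [ENNReal.add_eq_top, ENNReal.mul_eq_top] using hle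

theorem coe_nnnorm_vCoef_of_ne_zero {d : ℕ} (t : ℝ) (v : (Fin d → ℤ) → Fin d → ℂ) (m : Fin d)
    {k : Fin d → ℤ} (hk : k ≠ 0) :
    (‖vCoef t v m k‖₊ : ℝ≥0∞) = (k m).natAbs * ‖t‖₊ * ‖v k‖₊ := by
  simp [vCoef, hk, nnnorm_smul, ← NNReal.natCast_natAbs]

theorem kSq_mul_sq_nnnorm_le_sum_vCoef {d : ℕ} (t : ℝ) (v : (Fin d → ℤ) → Fin d → ℂ)
    (k : Fin d → ℤ) :
    (‖t‖₊ : ℝ≥0∞) ^ 2 * (kSq k * (‖v k‖₊ : ℝ≥0∞) ^ 2) ≤ ∑ m, (‖vCoef t v m k‖₊ : ℝ≥0∞) ^ 2 := by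
  rcases eq_or_ne k 0 with rfl | hk
  · simp
  · simp only [coe_nnnorm_vCoef_of_ne_zero t v _ hk, kSq, Finset.sum_mul, Finset.mul_sum]
    exact le_of_eq (Finset.sum_congr rfl fun _ _ => by ring)

theorem exists_vCoef_hSob_eq_top_general {d n : ℕ} (t : ℝ) (ht : 0 < t)
    (v : (Fin d → ℤ) → Fin d → ℂ)
    (hHn1 : hSobSq (n + 1) v = ⊤) :
    ∃ m : Fin d, hSobSq n (vCoef t v m) = ⊤ := by
  have ht2 : (‖t‖₊ : ℝ≥0∞) ^ 2 ≠ 0 := by simp [ht.ne']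
  have hsum : ∑ m, ∑' k, sobWeight n k * (‖vCoef t v m k‖₊ : ℝ≥0∞) ^ 2 = ⊤ := by
    rw [← Summable.tsum_finsetSum fun _ _ => ENNReal.summable, eq_top_iff]
    calc ⊤ = (‖t‖₊ : ℝ≥0∞) ^ 2 * ∑' k, kSq k * sobWeight n k * (‖v k‖₊ : ℝ≥0∞) ^ 2 := by
          rw [tsum_kSq_mul_sobWeight_eq_top hHn1, ENNReal.mul_top ht2]
      _ ≤ ∑' k, ∑ m, sobWeight n k * (‖vCoef t v m k‖₊ : ℝ≥0∞) ^ 2 := by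
          rw [← ENNReal.tsum_mul_left]
          refine ENNReal.tsum_le_tsum fun k => ?_
          rw [← Finset.mul_sum]
          calc _ = sobWeight n k * ((‖t‖₊ : ℝ≥0∞) ^ 2 * (kSq k * (‖v k‖₊ : ℝ≥0∞) ^ 2)) := by ring
            _ ≤ _ := by gcongr; exact kSq_mul_sq_nnnorm_le_sum_vCoef t v k
  obtain ⟨m, -, hm⟩ := ENNReal.sum_eq_top.mp hsum
  exact ⟨m, (hSobSq_eq_top_iff n _).mpr hm⟩

/-- If `u(t,·)` is in `Hⁿ(𝕋ᵈ)` but not in `Hⁿ⁺¹(𝕋ᵈ)` and `t > 0`, then some directional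
derivative `V_m(t,x) = e_m + Σ_k (-i k_m t) u_k(t) e^{ik·x}` has infinite `Hⁿ` norm. -/
theorem exists_vCoef_hSob_eq_top {d n : ℕ} (t : ℝ) (ht : 0 < t)
    (v : (Fin d → ℤ) → Fin d → ℂ)
    (hHn : hSobSq n v ≠ ⊤) (hHn1 : hSobSq (n + 1) v = ⊤) :
    ∃ m : Fin d, hSobSq n (vCoef t v m) = ⊤ :=
  exists_vCoef_hSob_eq_top_general t ht v hHn1
end

section
/- For 1/2 < γ ≤ 1, σ ∈ ℝ, and Re ∈ (0, ∞], the velocity field u₁(t,x₂) = Σ_{n=1}^∞ n^{−(3+γ)} e^{−n²t/Re} sin(n(x₂ − σt)), u₂ = σ, together with constant pressure, is an exact solution of the 2D Navier–Stokes equations (Euler equations when Re = ∞) on the torus [0,2π]². -/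
/-- Time partial derivative. -/
noncomputable def ptd (g : ℝ → ℝ × ℝ → ℝ) (t : ℝ) (x : ℝ × ℝ) : ℝ := deriv (fun s => g s x) t

/-- Spatial partial derivative in `x₁`. -/
noncomputable def px1 (g : ℝ × ℝ → ℝ) (x : ℝ × ℝ) : ℝ := deriv (fun y => g (y, x.2)) x.1

/-- Spatial partial derivative in `x₂`. -/
noncomputable def px2 (g : ℝ × ℝ → ℝ) (x : ℝ × ℝ) : ℝ := deriv (fun y => g (x.1, y)) x.2

/-- The first velocity component
`u₁(t,x₂) = Σ_{n≥1} n^{-(3+γ)} e^{-n² ν t} sin(n(x₂ - σ t))`, where `ν = 1/Re`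
(`ν = 0` is the Euler case `Re = ∞`). -/
noncomputable def shearU1 (γ σ ν : ℝ) (t : ℝ) (x : ℝ × ℝ) : ℝ :=
  ∑' n : ℕ, ((n : ℝ) + 1) ^ (-(3 + γ)) * Real.exp (-((n : ℝ) + 1) ^ 2 * ν * t) *
    Real.sin (((n : ℝ) + 1) * (x.2 - σ * t))


/-! Each mode `e^{-k²νt} sin(k(x₂ - σt))` solves the transport–diffusion equation
`∂ₜf = ν ∂²f/∂x₂² - σ ∂f/∂x₂`. Because `u₁` depends on `x₂` alone and `u₂ = σ`, this is precisely the
first momentum equation with constant pressure; the second one and incompressibility are trivial.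
Since `Σ n^{-(3+γ)} n²` converges, the termwise `x₂`-derivatives up to order two and the termwise
`t`-derivative are uniformly summable for `t > 0`, so the series may be differentiated term by term. -/

open Real

namespace ShearFlow

noncomputable def shearMode (σ ν k t y : ℝ) : ℝ :=
  exp (-k ^ 2 * ν * t) * sin (k * (y - σ * t))

noncomputable def shearModeDeriv (σ ν k t y : ℝ) : ℝ :=
  k * exp (-k ^ 2 * ν * t) * cos (k * (y - σ * t))

noncomputable def shearSeries (a k : ℕ → ℝ) (σ ν t y : ℝ) : ℝ :=
  ∑' n, a n * shearMode σ ν (k n) t y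

section Mode

variable {σ ν k t y : ℝ}

theorem hasDerivAt_shearMode :
    HasDerivAt (shearMode σ ν k t) (shearModeDeriv σ ν k t y) y := by
  have h := (((hasDerivAt_id y).sub_const (σ * t)).const_mul k).sin.const_mul
    (exp (-k ^ 2 * ν * t))
  refine h.congr_deriv ?_
  simp only [shearModeDeriv, id_eq]
  ring

theorem hasDerivAt_shearModeDeriv :
    HasDerivAt (shearModeDeriv σ ν k t) (-k ^ 2 * shearMode σ ν k t y) y := by
  have h := (((hasDerivAt_id y).sub_const (σ * t)).const_mul k).cos.const_mul
    (k * exp (-k ^ 2 * ν * t))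
  refine h.congr_deriv ?_
  simp only [shearMode, id_eq]
  ring

theorem hasDerivAt_shearMode_time :
    HasDerivAt (fun s => shearMode σ ν k s y)
      (ν * (-k ^ 2 * shearMode σ ν k t y) - σ * shearModeDeriv σ ν k t y) t := by
  have h := ((hasDerivAt_id t).const_mul (-k ^ 2 * ν)).exp.mul
    (((hasDerivAt_id t).const_mul σ).const_sub y |>.const_mul k).sin
  refine h.congr_deriv ?_
  simp only [shearMode, shearModeDeriv, id_eq]
  ring

theorem exp_neg_sq_mul_le_one (hν : 0 ≤ ν) (ht : 0 ≤ t) : exp (-k ^ 2 * ν * t) ≤ 1 := by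
  rw [exp_le_one_iff, neg_mul, neg_mul, neg_nonpos]
  positivity

theorem abs_shearMode_le_one (hν : 0 ≤ ν) (ht : 0 ≤ t) : |shearMode σ ν k t y| ≤ 1 := by
  rw [shearMode, abs_mul, abs_of_pos (exp_pos _)]
  exact mul_le_one₀ (exp_neg_sq_mul_le_one hν ht) (abs_nonneg _) (abs_sin_le_one _)

theorem abs_shearModeDeriv_le (hν : 0 ≤ ν) (ht : 0 ≤ t) : |shearModeDeriv σ ν k t y| ≤ |k| := by
  rw [shearModeDeriv, abs_mul, abs_mul, abs_of_pos (exp_pos _), mul_assoc]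
  exact mul_le_of_le_one_right (abs_nonneg k)
    (mul_le_one₀ (exp_neg_sq_mul_le_one hν ht) (abs_nonneg _) (abs_cos_le_one _))

end Mode

section Series

variable {a k : ℕ → ℝ} {σ ν t : ℝ}

theorem norm_mul_le_of_abs_le_sq {a m k : ℝ} (hm : |m| ≤ k ^ 2) : ‖a * m‖ ≤ ‖a‖ * k ^ 2 := by
  rw [norm_mul, Real.norm_eq_abs m]
  gcongr

theorem summable_shearMode_term (hk : ∀ n, 1 ≤ |k n|) (ha : Summable fun n => ‖a n‖ * k n ^ 2)
    (hν : 0 ≤ ν) (ht : 0 ≤ t) (y : ℝ) : Summable fun n => a n * shearMode σ ν (k n) t y :=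
  .of_norm_bounded ha fun n => norm_mul_le_of_abs_le_sq <|
    (abs_shearMode_le_one hν ht).trans ((one_le_sq_iff_one_le_abs _).2 (hk n))

theorem norm_shearModeDeriv_term_le (hk : ∀ n, 1 ≤ |k n|) (hν : 0 ≤ ν) (ht : 0 ≤ t) (n : ℕ)
    (y : ℝ) : ‖a n * shearModeDeriv σ ν (k n) t y‖ ≤ ‖a n‖ * k n ^ 2 := by
  refine norm_mul_le_of_abs_le_sq ((abs_shearModeDeriv_le hν ht).trans ?_)
  rw [← sq_abs (k n), sq]
  exact le_mul_of_one_le_left (abs_nonneg _) (hk n)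

theorem norm_sq_mul_shearMode_term_le (hν : 0 ≤ ν) (ht : 0 ≤ t) (n : ℕ) (y : ℝ) :
    ‖a n * (-k n ^ 2 * shearMode σ ν (k n) t y)‖ ≤ ‖a n‖ * k n ^ 2 := by
  refine norm_mul_le_of_abs_le_sq ?_
  rw [abs_mul, abs_neg, abs_of_nonneg (sq_nonneg _)]
  exact mul_le_of_le_one_right (sq_nonneg _) (abs_shearMode_le_one hν ht)

theorem hasDerivAt_shearSeries (hk : ∀ n, 1 ≤ |k n|) (ha : Summable fun n => ‖a n‖ * k n ^ 2)
    (hν : 0 ≤ ν) (ht : 0 ≤ t) (y : ℝ) :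
    HasDerivAt (shearSeries a k σ ν t) (∑' n, a n * shearModeDeriv σ ν (k n) t y) y :=
  hasDerivAt_tsum ha (fun n _ => hasDerivAt_shearMode.const_mul (a n))
    (norm_shearModeDeriv_term_le hk hν ht) (summable_shearMode_term hk ha hν ht 0) y

theorem hasDerivAt_tsum_shearModeDeriv (hk : ∀ n, 1 ≤ |k n|)
    (ha : Summable fun n => ‖a n‖ * k n ^ 2) (hν : 0 ≤ ν) (ht : 0 ≤ t) (y : ℝ) :
    HasDerivAt (fun y => ∑' n, a n * shearModeDeriv σ ν (k n) t y)
      (∑' n, a n * (-k n ^ 2 * shearMode σ ν (k n) t y)) y :=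
  hasDerivAt_tsum ha (fun n _ => hasDerivAt_shearModeDeriv.const_mul (a n))
    (norm_sq_mul_shearMode_term_le hν ht)
    (.of_norm_bounded ha (norm_shearModeDeriv_term_le hk hν ht · 0)) y

theorem hasDerivAt_shearSeries_time (hk : ∀ n, 1 ≤ |k n|)
    (ha : Summable fun n => ‖a n‖ * k n ^ 2) (hν : 0 ≤ ν) (ht : 0 < t) (y : ℝ) :
    HasDerivAt (fun s => shearSeries a k σ ν s y)
      (∑' n, a n * (ν * (-k n ^ 2 * shearMode σ ν (k n) t y) -
        σ * shearModeDeriv σ ν (k n) t y)) t := by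
  refine hasDerivAt_tsum_of_isPreconnected (ha.mul_left (ν + |σ|)) isOpen_Ioi isPreconnected_Ioi
    (fun n s _ => hasDerivAt_shearMode_time.const_mul (a n)) (fun n s hs => ?_) ht
    (summable_shearMode_term hk ha hν ht.le y) ht
  replace hs : 0 ≤ s := le_of_lt hs
  calc ‖a n * (ν * (-k n ^ 2 * shearMode σ ν (k n) s y) - σ * shearModeDeriv σ ν (k n) s y)‖
      = ‖ν * (a n * (-k n ^ 2 * shearMode σ ν (k n) s y)) -
          σ * (a n * shearModeDeriv σ ν (k n) s y)‖ := by ring_nf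
    _ ≤ ν * (‖a n‖ * k n ^ 2) + |σ| * (‖a n‖ * k n ^ 2) := by
      refine (norm_sub_le _ _).trans ?_
      rw [norm_mul ν, norm_mul σ, Real.norm_of_nonneg hν, Real.norm_eq_abs σ]
      gcongr
      exacts [norm_sq_mul_shearMode_term_le hν hs n y, norm_shearModeDeriv_term_le hk hν hs n y]
    _ = (ν + |σ|) * (‖a n‖ * k n ^ 2) := by ring

theorem deriv_shearSeries_time (hk : ∀ n, 1 ≤ |k n|) (ha : Summable fun n => ‖a n‖ * k n ^ 2)
    (hν : 0 ≤ ν) (ht : 0 < t) (y : ℝ) :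
    deriv (fun s => shearSeries a k σ ν s y) t =
      ν * deriv (deriv (shearSeries a k σ ν t)) y - σ * deriv (shearSeries a k σ ν t) y := by
  have hderiv : deriv (shearSeries a k σ ν t) =
      fun y => ∑' n, a n * shearModeDeriv σ ν (k n) t y :=
    funext fun y => (hasDerivAt_shearSeries hk ha hν ht.le y).deriv
  have hsum₁ : Summable fun n => a n * shearModeDeriv σ ν (k n) t y :=
    .of_norm_bounded ha (norm_shearModeDeriv_term_le hk hν ht.le · y)
  have hsum₂ : Summable fun n => a n * (-k n ^ 2 * shearMode σ ν (k n) t y) :=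
    .of_norm_bounded ha (norm_sq_mul_shearMode_term_le hν ht.le · y)
  rw [(hasDerivAt_shearSeries_time hk ha hν ht y).deriv, hderiv,
    (hasDerivAt_tsum_shearModeDeriv hk ha hν ht.le y).deriv, ← tsum_mul_left, ← tsum_mul_left,
    ← (hsum₂.mul_left ν).tsum_sub (hsum₁.mul_left σ)]
  congr 1 with n
  ring

end Series

theorem summable_norm_rpow_mul_sq {γ : ℝ} (hγ : 0 < γ) :
    Summable fun n : ℕ => ‖((n : ℝ) + 1) ^ (-(3 + γ))‖ * ((n : ℝ) + 1) ^ 2 := by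
  have h : Summable fun n : ℕ => ((n + 1 : ℕ) : ℝ) ^ (-(1 + γ)) :=
    (summable_nat_add_iff 1).2 (Real.summable_nat_rpow.2 (by linarith))
  refine h.congr fun n => ?_
  have hn : (0 : ℝ) < n + 1 := by positivity
  rw [Real.norm_of_nonneg (by positivity), ← Real.rpow_natCast _ 2, ← Real.rpow_add hn]
  push_cast
  ring_nf

theorem shearU1_eq_shearSeries (γ σ ν : ℝ) :
    shearU1 γ σ ν = fun t x =>
      shearSeries (fun n => ((n : ℝ) + 1) ^ (-(3 + γ))) (fun n => (n : ℝ) + 1) σ ν t x.2 := by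
  funext t x
  simp only [shearU1, shearSeries, shearMode, mul_assoc]

end ShearFlow

open ShearFlow

theorem shear_family_exact_solution_general (γ σ ν : ℝ) (hγ : 1 / 2 < γ)
    (hν : 0 ≤ ν) :
    (∀ t : ℝ, 0 < t → ∀ x : ℝ × ℝ,
      ptd (shearU1 γ σ ν) t x -
          ν * (px1 (px1 (shearU1 γ σ ν t)) x + px2 (px2 (shearU1 γ σ ν t)) x) =
        -(px1 (fun _ : ℝ × ℝ => (0 : ℝ)) x) -
          (shearU1 γ σ ν t x * px1 (shearU1 γ σ ν t) x + σ * px2 (shearU1 γ σ ν t) x)) ∧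
    (∀ t : ℝ, 0 < t → ∀ x : ℝ × ℝ,
      ptd (fun _ _ => σ) t x -
          ν * (px1 (px1 (fun _ : ℝ × ℝ => σ)) x + px2 (px2 (fun _ : ℝ × ℝ => σ)) x) =
        -(px2 (fun _ : ℝ × ℝ => (0 : ℝ)) x) -
          (shearU1 γ σ ν t x * px1 (fun _ : ℝ × ℝ => σ) x +
            σ * px2 (fun _ : ℝ × ℝ => σ) x)) ∧
    (∀ t : ℝ, 0 < t → ∀ x : ℝ × ℝ,
      px1 (shearU1 γ σ ν t) x + px2 (fun _ : ℝ × ℝ => σ) x = 0) := by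
  have hk : ∀ n : ℕ, 1 ≤ |(n : ℝ) + 1| := fun n =>
    (le_add_of_nonneg_left n.cast_nonneg).trans (le_abs_self _)
  have ha := summable_norm_rpow_mul_sq (by linarith : 0 < γ)
  rw [shearU1_eq_shearSeries]
  refine ⟨fun t ht x => ?_, fun _ _ _ => by simp [ptd, px1, px2],
    fun _ _ _ => by simp [px1, px2]⟩
  simp only [ptd, px1, px2, deriv_const]
  rw [deriv_shearSeries_time hk ha hν ht]
  ring

/-- For `1/2 < γ ≤ 1`, `σ ∈ ℝ` and `ν = 1/Re ∈ [0,∞)` (`ν = 0` being the Euler case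
`Re = ∞`), the velocity field `u = (u₁, σ)` with
`u₁ = Σ_{n≥1} n^{-(3+γ)} e^{-n² ν t} sin(n(x₂ - σ t))` and constant (zero) pressure is an
exact solution of the 2D incompressible Navier–Stokes equations
`∂ₜ u - ν Δu = -∇p - (u·∇)u`, `∇·u = 0`, on the torus `[0,2π]²`. -/
theorem shear_family_exact_solution (γ σ ν : ℝ) (hγ : 1 / 2 < γ) (hγ' : γ ≤ 1)
    (hν : 0 ≤ ν) :
    (∀ t : ℝ, 0 < t → ∀ x : ℝ × ℝ,
      ptd (shearU1 γ σ ν) t x -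
          ν * (px1 (px1 (shearU1 γ σ ν t)) x + px2 (px2 (shearU1 γ σ ν t)) x) =
        -(px1 (fun _ : ℝ × ℝ => (0 : ℝ)) x) -
          (shearU1 γ σ ν t x * px1 (shearU1 γ σ ν t) x + σ * px2 (shearU1 γ σ ν t) x)) ∧
    (∀ t : ℝ, 0 < t → ∀ x : ℝ × ℝ,
      ptd (fun _ _ => σ) t x -
          ν * (px1 (px1 (fun _ : ℝ × ℝ => σ)) x + px2 (px2 (fun _ : ℝ × ℝ => σ)) x) =
        -(px2 (fun _ : ℝ × ℝ => (0 : ℝ)) x) -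
          (shearU1 γ σ ν t x * px1 (fun _ : ℝ × ℝ => σ) x +
            σ * px2 (fun _ : ℝ × ℝ => σ) x)) ∧
    (∀ t : ℝ, 0 < t → ∀ x : ℝ × ℝ,
      px1 (shearU1 γ σ ν t) x + px2 (fun _ : ℝ × ℝ => σ) x = 0) :=
  shear_family_exact_solution_general γ σ ν hγ hν
end

section
/- Let ∂_σ u₁(t,x₂) = Σ_{n=1}^∞ (−t) n^{−(2+γ)} e^{−n²t/Re} cos(n(x₂ − σt)) and ∂_σ u₂ = 1 be the directional derivative in σ of the exact solution family. Then when Re = ∞ and 1/2 < γ ≤ 1, the H³ norm of (∂_σ u₁, ∂_σ u₂) is infinite for every t > 0. -/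
open scoped ENNReal

/-!
Keeping only the top-order weight `(n+1)^6`, the `n`-th summand is at least
`t² (n+1)^{6-2(2+γ)} = t² (n+1)^{2-2γ} ≥ t²` because `γ ≤ 1`, so the series diverges.
-/

theorem ENNReal.tsum_eq_top_of_forall_const_le {α : Type*} [Infinite α] {f : α → ℝ≥0∞}
    {c : ℝ≥0∞} (hc : c ≠ 0) (h : ∀ a, c ≤ f a) : ∑' a, f a = ⊤ :=
  top_unique <| (ENNReal.tsum_const_eq_top_of_ne_zero hc).symm.le.trans (ENNReal.tsum_le_tsum h)

theorem sq_le_pow_mul_sq_mul_rpow_neg {k : ℕ} {a x : ℝ} (t : ℝ) (hx : 1 ≤ x) (ha : a ≤ k) :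
    t ^ 2 ≤ x ^ (2 * k) * (t * x ^ (-a)) ^ 2 := by
  have hx₀ : 0 < x := zero_lt_one.trans_le hx
  have hgain : 1 ≤ x ^ ((k : ℝ) - a) := Real.one_le_rpow hx (sub_nonneg.mpr ha)
  have hsplit : x ^ (2 * k) * (t * x ^ (-a)) ^ 2 = t ^ 2 * (x ^ ((k : ℝ) - a)) ^ 2 := by
    rw [sub_eq_add_neg, Real.rpow_add hx₀, Real.rpow_natCast]
    ring
  rw [hsplit]
  exact le_mul_of_one_le_right (sq_nonneg t) (one_le_pow₀ hgain)

theorem ENNReal.ofReal_sq_le_sum_pow_mul_sq (k : ℕ) {a t x : ℝ} (ht : 0 ≤ t) (hx : 1 ≤ x)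
    (ha : a ≤ k) :
    ENNReal.ofReal (t ^ 2) ≤
      (∑ j ∈ Finset.range (k + 1), ENNReal.ofReal x ^ (2 * j)) *
        ENNReal.ofReal (t * x ^ (-a)) ^ 2 := by
  have hx₀ : 0 ≤ x := zero_le_one.trans hx
  have htop : ENNReal.ofReal x ^ (2 * k) ≤
      ∑ j ∈ Finset.range (k + 1), ENNReal.ofReal x ^ (2 * j) :=
    Finset.single_le_sum (f := fun j => ENNReal.ofReal x ^ (2 * j)) (fun _ _ => zero_le)
      (Finset.self_mem_range_succ k)
  calc ENNReal.ofReal (t ^ 2)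
      ≤ ENNReal.ofReal (x ^ (2 * k) * (t * x ^ (-a)) ^ 2) :=
        ENNReal.ofReal_le_ofReal (sq_le_pow_mul_sq_mul_rpow_neg t hx ha)
    _ = ENNReal.ofReal x ^ (2 * k) * ENNReal.ofReal (t * x ^ (-a)) ^ 2 := by
        rw [ENNReal.ofReal_mul (by positivity), ENNReal.ofReal_pow hx₀,
          ENNReal.ofReal_pow (by positivity)]
    _ ≤ _ := mul_le_mul_left htop _

theorem euler_directional_derivative_H3_infinite_general (γ t : ℝ) (hγ' : γ ≤ 1)
    (ht : 0 < t) :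
    ENNReal.ofReal (4 * Real.pi ^ 2) +
      ENNReal.ofReal Real.pi *
        ∑' n : ℕ, (∑ j ∈ Finset.range 4, ((n : ℝ≥0∞) + 1) ^ (2 * j)) *
          ENNReal.ofReal (t * ((n : ℝ) + 1) ^ (-(2 + γ))) ^ 2 = ⊤ := by
  have hterm (n : ℕ) : ENNReal.ofReal (t ^ 2) ≤
      (∑ j ∈ Finset.range 4, ((n : ℝ≥0∞) + 1) ^ (2 * j)) *
        ENNReal.ofReal (t * ((n : ℝ) + 1) ^ (-(2 + γ))) ^ 2 := by
    have hcast : ENNReal.ofReal ((n : ℝ) + 1) = (n : ℝ≥0∞) + 1 := by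
      rw [ENNReal.ofReal_add n.cast_nonneg zero_le_one, ENNReal.ofReal_natCast, ENNReal.ofReal_one]
    rw [← hcast]
    exact ENNReal.ofReal_sq_le_sum_pow_mul_sq 3 ht.le (by simp) (by push_cast; linarith)
  have hsum := ENNReal.tsum_eq_top_of_forall_const_le (by positivity) hterm
  rw [hsum, ENNReal.mul_top (ENNReal.ofReal_pos.mpr Real.pi_pos).ne', add_top]

/-- In the Euler case (`Re = ∞`), for `1/2 < γ ≤ 1` and `t > 0`, the `H³` norm (squared,
computed from the Fourier coefficients `b_n = t n^{-(2+γ)}` of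
`∂_σ u₁ = Σ_{n≥1} (-t) n^{-(2+γ)} cos(n(x₂ - σt))` together with the constant component
`∂_σ u₂ = 1`) of the directional derivative of the solution operator is infinite. -/
theorem euler_directional_derivative_H3_infinite (γ t : ℝ) (hγ : 1 / 2 < γ) (hγ' : γ ≤ 1)
    (ht : 0 < t) :
    ENNReal.ofReal (4 * Real.pi ^ 2) +
      ENNReal.ofReal Real.pi *
        ∑' n : ℕ, (∑ j ∈ Finset.range 4, ((n : ℝ≥0∞) + 1) ^ (2 * j)) *
          ENNReal.ofReal (t * ((n : ℝ) + 1) ^ (-(2 + γ))) ^ 2 = ⊤ :=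
  euler_directional_derivative_H3_infinite_general γ t hγ' ht
end
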